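/- arXiv:1201.5454 — 3 statements merged into one kernel-verified Lean document; each statement's English description precedes it below -/
import Mathlib

section
/- Let f solve (1/2)Δf − ∂f/∂t = −(1/2)|∇f|² with L = (1/2)Δ + ∇f·∇, and suppose G = −Δf satisfies ∂G/∂t ≤ LG − (1/n)G². Then F = (t/n + 1/C)·G satisfies (L − ∂/∂t)(F − 1) ≥ (1/n)G(F − 1) for any constant C > 0. -/
noncomputable section

open Real Set

def spatialLaplacian (n : ℕ) (f : ℝ × EuclideanSpace ℝ (Fin n) → ℝ)
    (t : ℝ) (x : EuclideanSpace ℝ (Fin n)) : ℝ :=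
  ∑ i : Fin n,
    fderiv ℝ (fun y => fderiv ℝ (fun z => f (t, z)) y (EuclideanSpace.single i 1)) x
      (EuclideanSpace.single i 1)

def spatialGrad (n : ℕ) (f : ℝ × EuclideanSpace ℝ (Fin n) → ℝ)
    (t : ℝ) (x : EuclideanSpace ℝ (Fin n)) : EuclideanSpace ℝ (Fin n) :=
  gradient (fun y => f (t, y)) x

def timeDeriv {n : ℕ} (f : ℝ × EuclideanSpace ℝ (Fin n) → ℝ)
    (t : ℝ) (x : EuclideanSpace ℝ (Fin n)) : ℝ :=
  deriv (fun s => f (s, x)) t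

/-- The operator `L = (1/2)Δ + ∇f·∇` applied to a function `g`. -/
def Lop (n : ℕ) (f g : ℝ × EuclideanSpace ℝ (Fin n) → ℝ)
    (t : ℝ) (x : EuclideanSpace ℝ (Fin n)) : ℝ :=
  (1/2) * spatialLaplacian n g t x + (inner ℝ (spatialGrad n f t x) (spatialGrad n g t x) : ℝ)

section Aux

variable {n : ℕ}

lemma aux_smooth_slice {G : ℝ × EuclideanSpace ℝ (Fin n) → ℝ} (hG : ContDiff ℝ (⊤ : ℕ∞) G) (t : ℝ) :
    ContDiff ℝ (⊤ : ℕ∞) (fun z : EuclideanSpace ℝ (Fin n) => G (t, z)) :=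
  hG.comp (contDiff_const.prodMk contDiff_id)

lemma aux_fderiv2 (g : EuclideanSpace ℝ (Fin n) → ℝ) (hg : ContDiff ℝ (⊤ : ℕ∞) g) (a b : ℝ)
    (v w x : EuclideanSpace ℝ (Fin n)) :
    fderiv ℝ (fun y => fderiv ℝ (fun z => a * g z - b) y v) x w
      = a * fderiv ℝ (fun y => fderiv ℝ g y v) x w := by
  have hD : Differentiable ℝ (fun y => fderiv ℝ g y v) :=
    (((hg.fderiv_right (m := (⊤ : ℕ∞)) (by simp)).differentiable (by simp)).clm_apply (differentiable_const v))
  have h1 : (fun y => fderiv ℝ (fun z => a * g z - b) y v) = fun y => a * fderiv ℝ g y v := by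
    funext y
    rw [fderiv_sub_const, fderiv_const_mul (hg.differentiable (by simp) y)]
    simp
  rw [h1, fderiv_const_mul (hD x)]
  simp

lemma aux_grad (g : EuclideanSpace ℝ (Fin n) → ℝ) (hg : ContDiff ℝ (⊤ : ℕ∞) g) (a b : ℝ)
    (x : EuclideanSpace ℝ (Fin n)) :
    gradient (fun z => a * g z - b) x = a • gradient g x := by
  unfold gradient
  rw [fderiv_sub_const, fderiv_const_mul (hg.differentiable (by simp) x)]
  simp

end Aux

/-- Let `f` solve `(1/2)Δf - ∂f/∂t = -(1/2)|∇f|²`, `L = (1/2)Δ + ∇f·∇`, and suppose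
`G = -Δf` satisfies `∂G/∂t ≤ LG - (1/n)G²`.  Then `F = (t/n + 1/C)·G` satisfies
`(L - ∂/∂t)(F - 1) ≥ (1/n) G (F - 1)` for any constant `C > 0`. -/
theorem F_inequality_for_maximum_principle (n : ℕ) (hn : 0 < n) (C : ℝ) (hC : 0 < C)
    (f : ℝ × EuclideanSpace ℝ (Fin n) → ℝ) (hf : ContDiff ℝ (⊤ : ℕ∞) f)
    (hpde : ∀ t x, (1/2) * spatialLaplacian n f t x - timeDeriv f t x
        = -(1/2) * ‖spatialGrad n f t x‖ ^ 2)
    (G : ℝ × EuclideanSpace ℝ (Fin n) → ℝ) (hGsmooth : ContDiff ℝ (⊤ : ℕ∞) G)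
    (hG : ∀ p : ℝ × EuclideanSpace ℝ (Fin n), G p = -(spatialLaplacian n f p.1 p.2))
    (hRic : ∀ t x, timeDeriv G t x ≤ Lop n f G t x - (1 / (n : ℝ)) * (G (t, x)) ^ 2)
    (F : ℝ × EuclideanSpace ℝ (Fin n) → ℝ)
    (hF : ∀ p : ℝ × EuclideanSpace ℝ (Fin n), F p = (p.1 / n + 1 / C) * G p) :
    ∀ t ≥ (0:ℝ), ∀ x,
      Lop n f (fun p => F p - 1) t x - timeDeriv (fun p => F p - 1) t x
        ≥ (1 / (n : ℝ)) * G (t, x) * (F (t, x) - 1) := by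
  have hFfun : F = fun p => (p.1 / n + 1 / C) * G p := funext hF
  subst hFfun
  intro t ht x
  set a : ℝ := t / n + 1 / C with ha
  have ha0 : 0 ≤ a := by positivity
  have hg : ContDiff ℝ (⊤ : ℕ∞) (fun z : EuclideanSpace ℝ (Fin n) => G (t, z)) :=
    aux_smooth_slice hGsmooth t
  -- Laplacian
  have hlap : spatialLaplacian n (fun p => (p.1 / n + 1 / C) * G p - 1) t x
      = a * spatialLaplacian n G t x := by
    simp only [spatialLaplacian]
    rw [Finset.mul_sum]
    refine Finset.sum_congr rfl fun i _ => ?_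
    exact aux_fderiv2 _ hg a 1 _ _ x
  -- Gradient
  have hgrad : spatialGrad n (fun p => (p.1 / n + 1 / C) * G p - 1) t x
      = a • spatialGrad n G t x := by
    simp only [spatialGrad]
    exact aux_grad _ hg a 1 x
  -- time derivative
  have hu : Differentiable ℝ (fun s : ℝ => s / n + 1 / C) := by
    apply Differentiable.add_const
    exact differentiable_id.div_const _
  have hv : Differentiable ℝ (fun s : ℝ => G (s, x)) :=
    (hGsmooth.comp (contDiff_id.prodMk contDiff_const)).differentiable (by simp)
  have htd : timeDeriv (fun p => (p.1 / n + 1 / C) * G p - 1) t x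
      = (1 / n) * G (t, x) + a * timeDeriv G t x := by
    simp only [timeDeriv]
    rw [deriv_sub_const, deriv_fun_mul (hu t) (hv t)]
    congr 1
    congr 1
    rw [deriv_add_const]
    simp [deriv_div_const]
  have hLop : Lop n f (fun p => (p.1 / n + 1 / C) * G p - 1) t x = a * Lop n f G t x := by
    simp only [Lop, hlap, hgrad, inner_smul_right]
    ring
  rw [hLop, htd]
  have hR := hRic t x
  have key : a * timeDeriv G t x ≤ a * (Lop n f G t x - (1 / (n : ℝ)) * (G (t, x)) ^ 2) :=
    mul_le_mul_of_nonneg_left hR ha0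
  have : (1 / (n : ℝ)) * G (t, x) * ((t / n + 1 / C) * G (t, x) - 1)
      = a * ((1 / (n : ℝ)) * (G (t, x)) ^ 2) - (1 / n) * G (t, x) := by
    rw [ha]; ring
  rw [this]
  nlinarith [key]
end
end

section
/- Let (Zₜ)_{t∈[0,T]} be an adapted process such that t ↦ e^{Kt}|Zₜ|² is a submartingale under a probability Q, and suppose the conditional BMO bound E^Q[∫ₜᵀ |Zₛ|² ds | ℱₜ] ≤ 4A holds a.s. for some A ≥ 0 and all t. Then |Zₜ|² ≤ 4KA/(1 − e^{−K(T−t)}) almost surely for each t < T. -/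
/-! Fix `t < T` and `E ∈ ℱₜ`. For `s ≥ t` the submartingale property gives
`∫_E |Z_s|² ≥ e^{-K(s-t)} ∫_E |Z_t|²`; integrating over `s ∈ (t, T]` and exchanging the
integrals,
`(1 - e^{-K(T-t)})/K · ∫_E |Z_t|² ≤ ∫_E ∫ₜᵀ |Z_s|² ds = ∫_E E^Q[∫ₜᵀ |Z_s|² ds | ℱₜ] ≤ 4A·Q(E)`.
As `|Z_t|²` is `ℱₜ`-measurable, this bound on all of its `ℱₜ`-set integrals is the pointwise
bound. The integrability needed for Fubini comes from the case `E = Ω`: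
`E^Q|Z_s|² ≤ e^{K(T-s)} E^Q|Z_T|²`. -/

open MeasureTheory Set Real

section Measure

variable {α : Type*} {m m0 : MeasurableSpace α} {μ : Measure α}

theorem ae_le_of_forall_setIntegral_le_of_stronglyMeasurable (hm : m ≤ m0) {f g : α → ℝ}
    (hfm : StronglyMeasurable[m] f) (hgm : StronglyMeasurable[m] g)
    (hf : Integrable f μ) (hg : Integrable g μ)
    (hle : ∀ s, MeasurableSet[m] s → ∫ x in s, f x ∂μ ≤ ∫ x in s, g x ∂μ) :
    f ≤ᵐ[μ] g := by
  refine ae_le_of_ae_le_trim (hm := hm) <|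
    ae_le_of_forall_setIntegral_le (hf.trim hm hfm) (hg.trim hm hgm) fun s hs _ => ?_
  rw [← setIntegral_trim hm hfm hs, ← setIntegral_trim hm hgm hs]
  exact hle s hs

theorem setIntegral_le_of_ae_condExp_le (hm : m ≤ m0) [IsFiniteMeasure μ] {f : α → ℝ}
    (hf : Integrable f μ) {c : ℝ} (hc : ∀ᵐ x ∂μ, μ[f | m] x ≤ c) {s : Set α}
    (hs : MeasurableSet[m] s) : ∫ x in s, f x ∂μ ≤ ∫ _ in s, c ∂μ := by
  rw [← setIntegral_condExp hm hf hs]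
  exact setIntegral_mono_ae integrable_condExp.integrableOn (integrable_const c).integrableOn hc

theorem integrable_prod_of_integral_norm_le {β E : Type*} [MeasurableSpace β]
    [NormedAddCommGroup E] [IsFiniteMeasure μ] {ν : Measure β} [SFinite ν] {f : α × β → E}
    (hf : AEStronglyMeasurable f (μ.prod ν)) (hfi : ∀ᵐ x ∂μ, Integrable (fun y => f (x, y)) ν)
    (M : ℝ) (hM : ∀ᵐ x ∂μ, ∫ y, ‖f (x, y)‖ ∂ν ≤ M) : Integrable f (μ.prod ν) := by
  refine (integrable_prod_iff hf).2 ⟨hfi, .of_bound hf.norm.integral_prod_right' M ?_⟩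
  filter_upwards [hM] with x hx
  rwa [Real.norm_of_nonneg (integral_nonneg fun _ => norm_nonneg _)]

end Measure

theorem integral_exp_neg_mul_sub {K : ℝ} (hK : K ≠ 0) (t T : ℝ) :
    ∫ s in t..T, exp (-(K * (s - t))) = (1 - exp (-(K * (T - t)))) / K := by
  have h := intervalIntegral.integral_comp_sub_mul (a := t) (b := T) exp hK (K * t)
  simp only [integral_exp, sub_self, exp_zero, smul_eq_mul] at h
  rw [show -(K * (T - t)) = K * t - K * T by ring, div_eq_inv_mul, ← h]
  congr 1 with s
  ring_nf

section Submartingale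

variable {Ω : Type*} {m0 : MeasurableSpace Ω} {Q : Measure Ω} {ℱ : Filtration ℝ m0}
  {g : ℝ → Ω → ℝ} {K : ℝ}

theorem eq_exp_neg_mul_mul_exp_mul (K s : ℝ) (g : Ω → ℝ) :
    g = fun ω => exp (-(K * s)) * (exp (K * s) * g ω) := by
  ext ω
  rw [← mul_assoc, ← exp_add, neg_add_cancel, exp_zero, one_mul]

variable (hsub : Submartingale (fun t ω => exp (K * t) * g t ω) ℱ Q)
include hsub

theorem integrable_of_submartingale_exp_mul (s : ℝ) : Integrable (g s) Q := by
  rw [eq_exp_neg_mul_mul_exp_mul K s (g s)]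
  exact (hsub.integrable s).const_mul _

theorem stronglyMeasurable_of_submartingale_exp_mul (s : ℝ) :
    StronglyMeasurable[ℱ s] (g s) := by
  rw [eq_exp_neg_mul_mul_exp_mul K s (g s)]
  exact stronglyMeasurable_const.mul (hsub.stronglyMeasurable s)

theorem exp_neg_mul_setIntegral_le_of_submartingale_exp_mul [IsFiniteMeasure Q] {t s : ℝ}
    (hts : t ≤ s) {E : Set Ω} (hE : MeasurableSet[ℱ t] E) :
    exp (-(K * (s - t))) * ∫ ω in E, g t ω ∂Q ≤ ∫ ω in E, g s ω ∂Q := by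
  have h := hsub.setIntegral_le hts hE
  rw [integral_const_mul, integral_const_mul] at h
  calc exp (-(K * (s - t))) * ∫ ω in E, g t ω ∂Q
      = exp (-(K * s)) * (exp (K * t) * ∫ ω in E, g t ω ∂Q) := by
        rw [← mul_assoc, ← exp_add]; ring_nf
    _ ≤ exp (-(K * s)) * (exp (K * s) * ∫ ω in E, g s ω ∂Q) := by gcongr
    _ = ∫ ω in E, g s ω ∂Q := by rw [← mul_assoc, ← exp_add, neg_add_cancel, exp_zero, one_mul]

theorem integrable_prod_of_submartingale_exp_mul [IsFiniteMeasure Q]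
    (hg : Measurable (Function.uncurry g)) (hg0 : ∀ s ω, 0 ≤ g s ω) (hK : 0 ≤ K) (t T : ℝ) :
    Integrable (Function.uncurry g) ((volume.restrict (Ioc t T)).prod Q) := by
  refine integrable_prod_of_integral_norm_le hg.aestronglyMeasurable
    (ae_of_all _ fun s => integrable_of_submartingale_exp_mul hsub s)
    (exp (K * (T - t)) * ∫ ω, g T ω ∂Q) ?_
  refine (ae_restrict_iff' measurableSet_Ioc).2 (ae_of_all _ fun s hs => ?_)
  have h := exp_neg_mul_setIntegral_le_of_submartingale_exp_mul hsub hs.2 MeasurableSet.univ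
  rw [← le_div_iff₀' (exp_pos _), div_eq_mul_inv,
    ← exp_neg, neg_neg, mul_comm, setIntegral_univ, setIntegral_univ] at h
  simp only [Function.uncurry_apply_pair, norm_of_nonneg (hg0 _ _)]
  calc ∫ ω, g s ω ∂Q ≤ exp (K * (T - s)) * ∫ ω, g T ω ∂Q := h
    _ ≤ exp (K * (T - t)) * ∫ ω, g T ω ∂Q := by
      gcongr
      · exact integral_nonneg (hg0 T)
      · exact hs.1.le

theorem integrable_intervalIntegral_of_submartingale_exp_mul [IsFiniteMeasure Q]
    (hg : Measurable (Function.uncurry g)) (hg0 : ∀ s ω, 0 ≤ g s ω) (hK : 0 ≤ K) {t T : ℝ}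
    (htT : t ≤ T) : Integrable (fun ω => ∫ s in t..T, g s ω) Q := by
  simp_rw [intervalIntegral.integral_of_le htT]
  exact (integrable_prod_of_submartingale_exp_mul hsub hg hg0 hK t T).integral_prod_right

theorem mul_setIntegral_le_setIntegral_intervalIntegral_of_submartingale_exp_mul
    [IsFiniteMeasure Q] (hg : Measurable (Function.uncurry g)) (hg0 : ∀ s ω, 0 ≤ g s ω)
    (hK : 0 < K) {t T : ℝ} (htT : t ≤ T) {E : Set Ω} (hE : MeasurableSet[ℱ t] E) :
    (1 - exp (-(K * (T - t)))) / K * ∫ ω in E, g t ω ∂Q ≤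
      ∫ ω in E, (∫ s in t..T, g s ω) ∂Q := by
  have hprod := (integrable_prod_of_submartingale_exp_mul hsub hg hg0 hK.le t T).restrict
    (s := univ ×ˢ E)
  rw [← Measure.prod_restrict, Measure.restrict_univ] at hprod
  calc (1 - exp (-(K * (T - t)))) / K * ∫ ω in E, g t ω ∂Q
      = ∫ s in t..T, exp (-(K * (s - t))) * ∫ ω in E, g t ω ∂Q := by
        rw [intervalIntegral.integral_mul_const, integral_exp_neg_mul_sub hK.ne']
    _ ≤ ∫ s in t..T, ∫ ω in E, g s ω ∂Q := by
      refine intervalIntegral.integral_mono_on htT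
        (Continuous.intervalIntegrable (by fun_prop) _ _)
        ((intervalIntegrable_iff_integrableOn_Ioc_of_le htT).2 hprod.integral_prod_left)
        fun s hs => exp_neg_mul_setIntegral_le_of_submartingale_exp_mul hsub hs.1 hE
    _ = ∫ ω in E, (∫ s in t..T, g s ω) ∂Q := by
      simp_rw [intervalIntegral.integral_of_le htT]
      exact integral_integral_swap hprod

end Submartingale

theorem gradient_bound_from_bmo_and_submartingale_general {Ω : Type*} {m0 : MeasurableSpace Ω}
    {Q : Measure Ω} [IsProbabilityMeasure Q] (ℱ : Filtration ℝ m0)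
    (m : ℕ) (Z : ℝ → Ω → EuclideanSpace ℝ (Fin m)) (K A T : ℝ)
    (hK : 0 < K)
    (hmeas : Measurable (Function.uncurry Z))
    (hsub : Submartingale (fun t ω => Real.exp (K * t) * ‖Z t ω‖ ^ 2) ℱ Q)
    (hbmo : ∀ t ∈ Icc (0:ℝ) T,
      ∀ᵐ ω ∂Q, (Q[(fun ω => ∫ s in t..T, ‖Z s ω‖ ^ 2) | ℱ t]) ω ≤ 4 * A) :
    ∀ t, 0 ≤ t → t < T →
      ∀ᵐ ω ∂Q, ‖Z t ω‖ ^ 2 ≤ 4 * K * A / (1 - Real.exp (-(K * (T - t)))) := by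
  intro t ht htT
  set g : ℝ → Ω → ℝ := fun s ω => ‖Z s ω‖ ^ 2
  have hg : Measurable (Function.uncurry g) := hmeas.norm.pow_const 2
  have hg0 : ∀ s ω, 0 ≤ g s ω := fun _ _ => by positivity
  have hD : 0 < 1 - exp (-(K * (T - t))) := sub_pos.2 (exp_lt_one_iff.2 (by nlinarith))
  refine ae_le_of_forall_setIntegral_le_of_stronglyMeasurable (ℱ.le t)
    (stronglyMeasurable_of_submartingale_exp_mul hsub t) stronglyMeasurable_const
    (integrable_of_submartingale_exp_mul hsub t) (integrable_const _) fun E hE => ?_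
  have hlower := mul_setIntegral_le_setIntegral_intervalIntegral_of_submartingale_exp_mul
    hsub hg hg0 hK htT.le hE
  have hupper := setIntegral_le_of_ae_condExp_le (ℱ.le t)
    (integrable_intervalIntegral_of_submartingale_exp_mul hsub hg hg0 hK.le htT.le)
    (hbmo t ⟨ht, htT.le⟩) hE
  rw [setIntegral_const, smul_eq_mul] at hupper ⊢
  rw [mul_div_assoc', le_div_iff₀ hD]
  have := mul_le_mul_of_nonneg_left (hlower.trans hupper) hK.le
  rw [← mul_assoc, mul_div_cancel₀ _ hK.ne'] at this
  linarith

/-- Abstract scheme of Theorem 3.7: if `e^{Kt}|Zₜ|²` is a submartingale under `Q`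
and the conditional BMO bound `E^Q[∫ₜᵀ |Zₛ|² ds | ℱₜ] ≤ 4A` holds, then
`|Zₜ|² ≤ 4KA/(1 - e^{-K(T-t)})` a.s. for each `t < T`. -/
theorem gradient_bound_from_bmo_and_submartingale {Ω : Type*} {m0 : MeasurableSpace Ω}
    {Q : Measure Ω} [IsProbabilityMeasure Q] (ℱ : Filtration ℝ m0)
    (m : ℕ) (Z : ℝ → Ω → EuclideanSpace ℝ (Fin m)) (K A T : ℝ)
    (hK : 0 < K) (hA : 0 ≤ A) (hT : 0 < T)
    (hmeas : Measurable (Function.uncurry Z))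
    (hint : Integrable (fun ω => ∫ s in (0:ℝ)..T, ‖Z s ω‖ ^ 2) Q)
    (hsub : Submartingale (fun t ω => Real.exp (K * t) * ‖Z t ω‖ ^ 2) ℱ Q)
    (hbmo : ∀ t ∈ Icc (0:ℝ) T,
      ∀ᵐ ω ∂Q, (Q[(fun ω => ∫ s in t..T, ‖Z s ω‖ ^ 2) | ℱ t]) ω ≤ 4 * A) :
    ∀ t, 0 ≤ t → t < T →
      ∀ᵐ ω ∂Q, ‖Z t ω‖ ^ 2 ≤ 4 * K * A / (1 - Real.exp (-(K * (T - t)))) :=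
  gradient_bound_from_bmo_and_submartingale_general ℱ m Z K A T hK hmeas hsub hbmo
end

section
/- If f is smooth on M and f̃ = f∘π its horizontal lift to O(M), then Σ_{α,β} (L̃_α f̃)·([L̃_β, L̃_α] L̃_β f̃) = Ric(∇f, ∇f) ∘ π, where Ric is the Ricci curvature of M. -/
noncomputable section

open Real Set

/-- The total space of the orthonormal frame bundle `O(M)` in local coordinates
`(xᵏ, eⱼⁱ)`. -/
abbrev FrameSpace (n : ℕ) := EuclideanSpace ℝ (Fin n) × (Fin n → Fin n → ℝ)

/-- Action of a vector field on a function. -/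
def vApply {n : ℕ} (V : FrameSpace n → FrameSpace n) (g : FrameSpace n → ℝ)
    (p : FrameSpace n) : ℝ :=
  fderiv ℝ g p (V p)

/-- Lie bracket of vector fields on the frame bundle. -/
def lieB {n : ℕ} (V W : FrameSpace n → FrameSpace n) (p : FrameSpace n) :
    FrameSpace n :=
  fderiv ℝ W p (V p) - fderiv ℝ V p (W p)

/-- The canonical horizontal vector field `L̃_α` associated with Christoffel
symbols `Γ` (`Γ x i j k = Γᵏᵢⱼ(x)`). -/
def Lhor {n : ℕ} (Γ : EuclideanSpace ℝ (Fin n) → Fin n → Fin n → Fin n → ℝ)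
    (α : Fin n) (p : FrameSpace n) : FrameSpace n :=
  ((EuclideanSpace.equiv (Fin n) ℝ).symm (fun i => p.2 α i),
    fun l k => -(∑ i, ∑ j, Γ p.1 i j k * p.2 α i * p.2 l j))

/-- The Ricci curvature expressed through first derivatives of the Christoffel
symbols, valid at a point of a normal coordinate system (`Γ = 0`, `dg = 0`). -/
def RicciAt {n : ℕ} (Γ : EuclideanSpace ℝ (Fin n) → Fin n → Fin n → Fin n → ℝ)
    (x : EuclideanSpace ℝ (Fin n)) (q k : Fin n) : ℝ :=
  (∑ i, fderiv ℝ (fun y => Γ y i i k) x (EuclideanSpace.single q 1))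
    - ∑ i, fderiv ℝ (fun y => Γ y q i k) x (EuclideanSpace.single i 1)

lemma clm_esymm {n : ℕ} (φ : EuclideanSpace ℝ (Fin n) →L[ℝ] ℝ) (c : Fin n → ℝ) :
    φ ((EuclideanSpace.equiv (Fin n) ℝ).symm c) = ∑ i, c i * φ (EuclideanSpace.single i 1) := by
  have h : (EuclideanSpace.equiv (Fin n) ℝ).symm c = ∑ i, c i • EuclideanSpace.single i 1 := by
    apply (EuclideanSpace.equiv (Fin n) ℝ).injective
    ext j
    simp [Pi.single_apply, mul_ite, mul_one, mul_zero, Finset.sum_ite_eq]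
  rw [h, map_sum]
  simp [smul_eq_mul]

/-- coordinate CLM on frame part -/
def coordCLM {n : ℕ} (β i : Fin n) : FrameSpace n →L[ℝ] ℝ :=
  (ContinuousLinearMap.proj i).comp ((ContinuousLinearMap.proj β).comp
    (ContinuousLinearMap.snd ℝ (EuclideanSpace ℝ (Fin n)) (Fin n → Fin n → ℝ)))

lemma coordCLM_apply {n : ℕ} (β i : Fin n) (v : FrameSpace n) : coordCLM β i v = v.2 β i := rfl

lemma hasFDerivAt_coord {n : ℕ} (β i : Fin n) (p : FrameSpace n) :
    HasFDerivAt (fun q : FrameSpace n => q.2 β i) (coordCLM β i) p :=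
  (coordCLM β i).hasFDerivAt

def fstCLM (n : ℕ) : FrameSpace n →L[ℝ] EuclideanSpace ℝ (Fin n) :=
  ContinuousLinearMap.fst ℝ _ _

def c1 {n : ℕ} (α : Fin n) : FrameSpace n →L[ℝ] EuclideanSpace ℝ (Fin n) :=
  (((EuclideanSpace.equiv (Fin n) ℝ).symm : (Fin n → ℝ) →L[ℝ] EuclideanSpace ℝ (Fin n))).comp
    ((ContinuousLinearMap.proj α).comp (ContinuousLinearMap.snd ℝ _ _))

def Dcomp {n : ℕ} (Γ : EuclideanSpace ℝ (Fin n) → Fin n → Fin n → Fin n → ℝ)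
    (p : FrameSpace n) (i j k : Fin n) : FrameSpace n →L[ℝ] ℝ :=
  (fderiv ℝ (fun y => Γ y i j k) p.1).comp (fstCLM n)

def Lder {n : ℕ} (Γ : EuclideanSpace ℝ (Fin n) → Fin n → Fin n → Fin n → ℝ)
    (α : Fin n) (p : FrameSpace n) : FrameSpace n →L[ℝ] FrameSpace n :=
  (c1 α).prod (ContinuousLinearMap.pi fun l => ContinuousLinearMap.pi fun k =>
    -(∑ i, ∑ j, (p.2 α i * p.2 l j) • Dcomp Γ p i j k))

lemma hΓijk {n : ℕ} {Γ : EuclideanSpace ℝ (Fin n) → Fin n → Fin n → Fin n → ℝ}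
    (hΓ : ContDiff ℝ (⊤ : ℕ∞) (fun x => Γ x)) (i j k : Fin n) :
    ContDiff ℝ (⊤ : ℕ∞) (fun y => Γ y i j k) :=
  (contDiff_pi.mp ((contDiff_pi.mp ((contDiff_pi.mp hΓ) i)) j)) k

lemma hasFDerivAt_Lhor {n : ℕ} {Γ : EuclideanSpace ℝ (Fin n) → Fin n → Fin n → Fin n → ℝ}
    (hΓ : ContDiff ℝ (⊤ : ℕ∞) (fun x => Γ x)) (p : FrameSpace n)
    (hnormal : ∀ i j k, Γ p.1 i j k = 0) (α : Fin n) :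
    HasFDerivAt (Lhor Γ α) (Lder Γ α p) p := by
  apply HasFDerivAt.prodMk
  · exact (c1 α).hasFDerivAt
  · apply hasFDerivAt_pi''
    intro l
    rw [ContinuousLinearMap.proj_pi]
    apply hasFDerivAt_pi''
    intro k
    rw [ContinuousLinearMap.proj_pi]
    have hterm : ∀ i j : Fin n, HasFDerivAt
        (fun q : FrameSpace n => Γ q.1 i j k * q.2 α i * q.2 l j)
        ((p.2 α i * p.2 l j) • Dcomp Γ p i j k) p := by
      intro i j
      have h1 : HasFDerivAt (fun q : FrameSpace n => Γ q.1 i j k) (Dcomp Γ p i j k) p :=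
        ((hΓijk hΓ i j k).differentiable (by simp) p.1).hasFDerivAt.comp p hasFDerivAt_fst
      have h12 := (h1.mul (hasFDerivAt_coord α i p)).mul (hasFDerivAt_coord l j p)
      have heq : (Γ p.1 i j k * p.2 α i) • coordCLM l j
            + p.2 l j • (Γ p.1 i j k • coordCLM α i + p.2 α i • Dcomp Γ p i j k)
          = (p.2 α i * p.2 l j) • Dcomp Γ p i j k := by
        apply ContinuousLinearMap.ext
        intro v
        rw [hnormal]
        simp only [ContinuousLinearMap.add_apply, ContinuousLinearMap.smul_apply,
          zero_mul, zero_smul, smul_eq_mul, zero_add, ContinuousLinearMap.zero_apply]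
        ring
      rw [← heq]
      exact h12
    have hsum := HasFDerivAt.fun_sum (fun i (_ : i ∈ Finset.univ) => HasFDerivAt.fun_sum
      (fun j (_ : j ∈ Finset.univ) => hterm i j))
    exact hsum.neg

lemma Lhor_at {n : ℕ} {Γ : EuclideanSpace ℝ (Fin n) → Fin n → Fin n → Fin n → ℝ}
    (p : FrameSpace n) (hnormal : ∀ i j k, Γ p.1 i j k = 0) (β : Fin n) :
    Lhor Γ β p = ((EuclideanSpace.equiv (Fin n) ℝ).symm (fun i => p.2 β i), 0) := by
  unfold Lhor
  refine Prod.ext rfl ?_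
  funext l k
  simp [hnormal]

lemma lieB_eval {n : ℕ} {Γ : EuclideanSpace ℝ (Fin n) → Fin n → Fin n → Fin n → ℝ}
    (hΓ : ContDiff ℝ (⊤ : ℕ∞) (fun x => Γ x)) (p : FrameSpace n)
    (hnormal : ∀ i j k, Γ p.1 i j k = 0) (α β : Fin n) :
    lieB (Lhor Γ β) (Lhor Γ α) p = (0, fun l k =>
      (∑ i, ∑ j, ∑ m, fderiv ℝ (fun y => Γ y i j k) p.1 (EuclideanSpace.single m 1)
          * p.2 α m * p.2 β i * p.2 l j)
      - (∑ i, ∑ j, ∑ m, fderiv ℝ (fun y => Γ y i j k) p.1 (EuclideanSpace.single m 1)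
          * p.2 β m * p.2 α i * p.2 l j)) := by
  have hα := (hasFDerivAt_Lhor hΓ p hnormal α).fderiv
  have hβ := (hasFDerivAt_Lhor hΓ p hnormal β).fderiv
  unfold lieB
  rw [hα, hβ, Lhor_at p hnormal α, Lhor_at p hnormal β]
  have hev : ∀ γ δ : Fin n, (Lder Γ γ p) ((EuclideanSpace.equiv (Fin n) ℝ).symm (fun i => p.2 δ i), 0)
      = (0, fun l k => -(∑ i, ∑ j, ∑ m, fderiv ℝ (fun y => Γ y i j k) p.1 (EuclideanSpace.single m 1)
          * p.2 δ m * p.2 γ i * p.2 l j)) := by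
    intro γ δ
    unfold Lder
    refine Prod.ext ?_ ?_
    · show c1 γ (_, (0 : Fin n → Fin n → ℝ)) = 0
      unfold c1
      simp
    · funext l k
      show (ContinuousLinearMap.pi fun l => ContinuousLinearMap.pi fun k =>
        -(∑ i, ∑ j, (p.2 γ i * p.2 l j) • Dcomp Γ p i j k)) _ l k = _
      simp only [ContinuousLinearMap.pi_apply, ContinuousLinearMap.neg_apply,
        ContinuousLinearMap.sum_apply, ContinuousLinearMap.smul_apply]
      congr 1
      refine Finset.sum_congr rfl fun i _ => Finset.sum_congr rfl fun j _ => ?_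
      have : (Dcomp Γ p i j k) ((EuclideanSpace.equiv (Fin n) ℝ).symm (fun m => p.2 δ m), 0)
          = ∑ m, p.2 δ m * fderiv ℝ (fun y => Γ y i j k) p.1 (EuclideanSpace.single m 1) := by
        unfold Dcomp fstCLM
        rw [ContinuousLinearMap.comp_apply]
        exact clm_esymm _ _
      rw [this]
      rw [smul_eq_mul, Finset.mul_sum]
      refine Finset.sum_congr rfl fun m _ => by ring
  rw [hev α β, hev β α]
  refine Prod.ext (by simp) ?_
  funext l k
  simp only [Prod.snd_sub, Pi.sub_apply]
  ring

lemma gval {n : ℕ} {Γ : EuclideanSpace ℝ (Fin n) → Fin n → Fin n → Fin n → ℝ}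
    {f : EuclideanSpace ℝ (Fin n) → ℝ} (hf : ContDiff ℝ (⊤ : ℕ∞) f) (β : Fin n) (q : FrameSpace n) :
    vApply (Lhor Γ β) (fun q => f q.1) q
      = ∑ i, fderiv ℝ f q.1 (EuclideanSpace.single i 1) * q.2 β i := by
  have hc : HasFDerivAt (fun q : FrameSpace n => f q.1) ((fderiv ℝ f q.1).comp (fstCLM n)) q :=
    ((hf.differentiable (by simp) q.1).hasFDerivAt).comp q hasFDerivAt_fst
  unfold vApply
  rw [hc.fderiv, ContinuousLinearMap.comp_apply]
  have h1 : (fstCLM n) (Lhor Γ β q) = (EuclideanSpace.equiv (Fin n) ℝ).symm (fun i => q.2 β i) := rfl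
  rw [h1, clm_esymm]
  exact Finset.sum_congr rfl fun i _ => by ring

lemma gder {n : ℕ} {f : EuclideanSpace ℝ (Fin n) → ℝ} (hf : ContDiff ℝ (⊤ : ℕ∞) f)
    (β : Fin n) (p : FrameSpace n) (A : Fin n → Fin n → ℝ) :
    fderiv ℝ (fun q : FrameSpace n => ∑ i, fderiv ℝ f q.1 (EuclideanSpace.single i 1) * q.2 β i) p
      ((0 : EuclideanSpace ℝ (Fin n)), A)
    = ∑ i, fderiv ℝ f p.1 (EuclideanSpace.single i 1) * A β i := by
  have hφ : ∀ i : Fin n, Differentiable ℝ (fun x => fderiv ℝ f x (EuclideanSpace.single i 1)) := by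
    intro i
    have h := (hf.fderiv_right (m := (⊤ : ℕ∞)) le_rfl).differentiable (by simp)
    exact (ContinuousLinearMap.apply ℝ ℝ (EuclideanSpace.single i 1)).differentiable.comp h
  have hterm : ∀ i : Fin n, HasFDerivAt
      (fun q : FrameSpace n => fderiv ℝ f q.1 (EuclideanSpace.single i 1) * q.2 β i)
      ((fderiv ℝ f p.1 (EuclideanSpace.single i 1)) • coordCLM β i
        + p.2 β i • ((fderiv ℝ (fun x => fderiv ℝ f x (EuclideanSpace.single i 1)) p.1).comp (fstCLM n))) p := by
    intro i
    have h1 : HasFDerivAt (fun q : FrameSpace n => fderiv ℝ f q.1 (EuclideanSpace.single i 1))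
        ((fderiv ℝ (fun x => fderiv ℝ f x (EuclideanSpace.single i 1)) p.1).comp (fstCLM n)) p :=
      ((hφ i) p.1).hasFDerivAt.comp p hasFDerivAt_fst
    exact h1.mul (hasFDerivAt_coord β i p)
  have hsum := HasFDerivAt.fun_sum (fun i (_ : i ∈ Finset.univ) => hterm i)
  rw [hsum.fderiv]
  simp only [ContinuousLinearMap.sum_apply, ContinuousLinearMap.add_apply,
    ContinuousLinearMap.smul_apply, ContinuousLinearMap.comp_apply, smul_eq_mul]
  refine Finset.sum_congr rfl fun i _ => ?_
  have h0 : (fstCLM n) ((0 : EuclideanSpace ℝ (Fin n)), A) = 0 := rfl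
  rw [h0, map_zero]
  show fderiv ℝ f p.1 (EuclideanSpace.single i 1) * A β i + p.2 β i * 0 = _
  ring

variable {A B C D E : Type*} [Fintype A] [Fintype B] [Fintype C] [Fintype D] [Fintype E]

lemma rot3 (g : A → B → C → ℝ) :
    ∑ a, ∑ b, ∑ c, g a b c = ∑ b, ∑ c, ∑ a, g a b c := by
  rw [Finset.sum_comm]
  exact Finset.sum_congr rfl fun b _ => Finset.sum_comm

lemma rot4 (g : A → B → C → D → ℝ) :
    ∑ a, ∑ b, ∑ c, ∑ d, g a b c d = ∑ b, ∑ c, ∑ d, ∑ a, g a b c d := by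
  rw [Finset.sum_comm]
  exact Finset.sum_congr rfl fun b _ => rot3 fun a c d => g a b c d

lemma rot5 (g : A → B → C → D → E → ℝ) :
    ∑ a, ∑ b, ∑ c, ∑ d, ∑ e, g a b c d e = ∑ b, ∑ c, ∑ d, ∑ e, ∑ a, g a b c d e := by
  rw [Finset.sum_comm]
  exact Finset.sum_congr rfl fun b _ => rot4 fun a c d e => g a b c d e

lemma fac2 (c : ℝ) (P : A → ℝ) (Q : B → ℝ) :
    ∑ a, ∑ b, c * P a * Q b = c * (∑ a, P a) * (∑ b, Q b) := by
  symm
  rw [mul_assoc, Finset.sum_mul_sum, Finset.mul_sum]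
  refine Finset.sum_congr rfl fun a _ => ?_
  rw [Finset.mul_sum]
  refine Finset.sum_congr rfl fun b _ => by ring

lemma alg {n : ℕ} (F : Fin n → ℝ) (D : Fin n → Fin n → Fin n → Fin n → ℝ)
    (e : Fin n → Fin n → ℝ)
    (hortho : ∀ i j, (∑ α, e α i * e α j) = if i = j then (1:ℝ) else 0) :
    ∑ α, ∑ β, (∑ q, F q * e α q) *
      (∑ k, F k * ((∑ i, ∑ j, ∑ m, D i j k m * e α m * e β i * e β j)
                  - ∑ i, ∑ j, ∑ m, D i j k m * e β m * e α i * e β j))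
    = ∑ q, ∑ k, ((∑ i, D i i k q) - (∑ i, D q i k i)) * F q * F k := by
  -- expand product of the two sums
  have step1 : ∀ α β : Fin n, (∑ q, F q * e α q) *
      (∑ k, F k * ((∑ i, ∑ j, ∑ m, D i j k m * e α m * e β i * e β j)
                  - ∑ i, ∑ j, ∑ m, D i j k m * e β m * e α i * e β j))
      = ∑ q, ∑ k, (F q * e α q) * (F k * ((∑ i, ∑ j, ∑ m, D i j k m * e α m * e β i * e β j)
                  - ∑ i, ∑ j, ∑ m, D i j k m * e β m * e α i * e β j)) :=
    fun α β => Finset.sum_mul_sum _ _ _ _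
  rw [Finset.sum_congr rfl fun α _ => Finset.sum_congr rfl fun β _ => step1 α β]
  rw [rot4 fun α β q k => _, rot4 fun β q k α => _]
  refine Finset.sum_congr rfl fun q _ => Finset.sum_congr rfl fun k _ => ?_
  -- now fixed q k; split into the two contractions
  have expand : ∀ α β : Fin n,
      (F q * e α q) * (F k * ((∑ i, ∑ j, ∑ m, D i j k m * e α m * e β i * e β j)
                  - ∑ i, ∑ j, ∑ m, D i j k m * e β m * e α i * e β j))
      = (∑ i, ∑ j, ∑ m, (F q * F k * D i j k m) * (e α q * e α m) * (e β i * e β j))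
        - (∑ i, ∑ j, ∑ m, (F q * F k * D i j k m) * (e α q * e α i) * (e β m * e β j)) := by
    intro α β
    rw [mul_sub, mul_sub]
    congr 1 <;>
    · simp only [Finset.mul_sum]
      exact Finset.sum_congr rfl fun i _ => Finset.sum_congr rfl fun j _ =>
        Finset.sum_congr rfl fun m _ => by ring
  rw [Finset.sum_congr rfl fun α _ => Finset.sum_congr rfl fun β _ => expand α β]
  simp only [Finset.sum_sub_distrib]
  have S1 : ∑ α, ∑ β, (∑ i, ∑ j, ∑ m, (F q * F k * D i j k m) * (e α q * e α m) * (e β i * e β j))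
      = ∑ i, F q * F k * D i i k q := by
    rw [rot5 fun α β i j m => _, rot5 fun β i j m α => _]
    have : ∀ i j m : Fin n, ∑ α, ∑ β, (F q * F k * D i j k m) * (e α q * e α m) * (e β i * e β j)
        = (F q * F k * D i j k m) * (if q = m then (1:ℝ) else 0) * (if i = j then (1:ℝ) else 0) := by
      intro i j m
      rw [fac2, hortho, hortho]
    rw [Finset.sum_congr rfl fun i _ => Finset.sum_congr rfl fun j _ =>
      Finset.sum_congr rfl fun m _ => this i j m]
    simp [mul_ite, mul_one, mul_zero, ite_mul, zero_mul, Finset.sum_ite_eq, Finset.sum_ite_eq']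
  have S2 : ∑ α, ∑ β, (∑ i, ∑ j, ∑ m, (F q * F k * D i j k m) * (e α q * e α i) * (e β m * e β j))
      = ∑ i, F q * F k * D q i k i := by
    rw [rot5 fun α β i j m => _, rot5 fun β i j m α => _]
    have : ∀ i j m : Fin n, ∑ α, ∑ β, (F q * F k * D i j k m) * (e α q * e α i) * (e β m * e β j)
        = (F q * F k * D i j k m) * (if q = i then (1:ℝ) else 0) * (if m = j then (1:ℝ) else 0) := by
      intro i j m
      rw [fac2, hortho, hortho]
    rw [Finset.sum_congr rfl fun i _ => Finset.sum_congr rfl fun j _ =>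
      Finset.sum_congr rfl fun m _ => this i j m]
    simp [mul_ite, mul_one, mul_zero, ite_mul, zero_mul, Finset.sum_ite_eq, Finset.sum_ite_eq']
  rw [S1, S2, sub_mul, sub_mul, Finset.sum_mul, Finset.sum_mul, Finset.sum_mul, Finset.sum_mul]
  congr 1 <;> exact Finset.sum_congr rfl fun i _ => by ring

/-- If `f` is smooth on `M` and `f̃ = f ∘ π` its horizontal lift to `O(M)`, then
`Σ_{α,β} (L̃_α f̃)·([L̃_β, L̃_α] L̃_β f̃) = Ric(∇f, ∇f) ∘ π`, evaluated at a frame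
`p = (x, e)` with `e` orthonormal, in a normal coordinate system centred at `x`
(`Γ(x) = 0`). -/
theorem sum_bracket_eq_ricci (n : ℕ)
    (Γ : EuclideanSpace ℝ (Fin n) → Fin n → Fin n → Fin n → ℝ)
    (hΓ : ContDiff ℝ (⊤ : ℕ∞) (fun x => Γ x))
    (hΓsymm : ∀ x i j k, Γ x i j k = Γ x j i k)
    (f : EuclideanSpace ℝ (Fin n) → ℝ) (hf : ContDiff ℝ (⊤ : ℕ∞) f)
    (p : FrameSpace n)
    (hortho : ∀ i j, (∑ α, p.2 α i * p.2 α j) = if i = j then (1:ℝ) else 0)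
    (hnormal : ∀ i j k, Γ p.1 i j k = 0) :
    (∑ α : Fin n, ∑ β : Fin n,
        vApply (Lhor Γ α) (fun q => f q.1) p
          * vApply (fun q => lieB (Lhor Γ β) (Lhor Γ α) q)
              (vApply (Lhor Γ β) (fun q => f q.1)) p)
      = ∑ q : Fin n, ∑ k : Fin n,
          RicciAt Γ p.1 q k * fderiv ℝ f p.1 (EuclideanSpace.single q 1)
            * fderiv ℝ f p.1 (EuclideanSpace.single k 1) := by
  have key : ∀ α β : Fin n,
      vApply (Lhor Γ α) (fun q => f q.1) p
        * vApply (fun q => lieB (Lhor Γ β) (Lhor Γ α) q)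
            (vApply (Lhor Γ β) (fun q => f q.1)) p
      = (∑ q, fderiv ℝ f p.1 (EuclideanSpace.single q 1) * p.2 α q)
        * (∑ k, fderiv ℝ f p.1 (EuclideanSpace.single k 1) *
            ((∑ i, ∑ j, ∑ m, fderiv ℝ (fun y => Γ y i j k) p.1 (EuclideanSpace.single m 1)
                * p.2 α m * p.2 β i * p.2 β j)
            - ∑ i, ∑ j, ∑ m, fderiv ℝ (fun y => Γ y i j k) p.1 (EuclideanSpace.single m 1)
                * p.2 β m * p.2 α i * p.2 β j)) := by
    intro α β
    congr 1
    · exact gval hf α p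
    · show fderiv ℝ (vApply (Lhor Γ β) fun q => f q.1) p (lieB (Lhor Γ β) (Lhor Γ α) p) = _
      rw [show (vApply (Lhor Γ β) fun q => f q.1)
          = fun q : FrameSpace n => ∑ i, fderiv ℝ f q.1 (EuclideanSpace.single i 1) * q.2 β i
          from funext (gval hf β)]
      rw [lieB_eval hΓ p hnormal α β]
      exact gder hf β p _
  rw [Finset.sum_congr rfl fun α _ => Finset.sum_congr rfl fun β _ => key α β]
  exact alg _ _ _ hortho
end
end
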